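/- arXiv:1106.4125 — 2 statements merged into one kernel-verified Lean document; each statement's English description precedes it below -/
import Mathlib

section
/- Let G be the set of homeomorphisms f of ℝ such that f − id and f⁻¹ − id belong to W^{1,∞}(ℝ) and f_ξ − 1 ∈ L²(ℝ). Then G is a group under composition. -/
/-!
Bounds and Lipschitz constants of the displacements `x ↦ f x - x` add up under composition,
and inversion merely swaps the roles of `f` and `f⁻¹`. For the `L²` condition, a homeomorphism
`g` of `ℝ` with `L`-Lipschitz inverse satisfies `g_* vol ≤ L • vol`, so precomposition with `g`
preserves null sets and `Lᵖ`. Combined with Rademacher's theorem this gives the a.e. chain rule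
`(f ∘ g)' - 1 = (f' ∘ g - 1) g' + (g' - 1)`, with `g'` bounded, and the a.e. inverse rule
`(f⁻¹)' - 1 = (1 - f' ∘ f⁻¹) / (f' ∘ f⁻¹)`, where `|f'| ≥ 1 / Lip(f⁻¹)`.
-/

open MeasureTheory Real

noncomputable section

/-- Membership in the relabeling group `G`: `f` is a homeomorphism of `ℝ` such that
`f - id` and `f⁻¹ - id` belong to `W^{1,∞}(ℝ)` (bounded and Lipschitz) and
`f_ξ - 1 ∈ L²(ℝ)`. -/
def MemG (f : ℝ ≃ₜ ℝ) : Prop :=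
  (∃ C : ℝ, ∀ x, |f x - x| ≤ C) ∧
  (∃ K : NNReal, LipschitzWith K (fun x => f x - x)) ∧
  (∃ C : ℝ, ∀ x, |f.symm x - x| ≤ C) ∧
  (∃ K : NNReal, LipschitzWith K (fun x => f.symm x - x)) ∧
  MemLp (fun x => deriv (f : ℝ → ℝ) x - 1) 2 volume

open scoped ENNReal NNReal

section Displacement

variable {E : Type*} [SeminormedAddCommGroup E]

lemma LipschitzWith.of_sub_id {f : E → E} {K : ℝ≥0} (h : LipschitzWith K fun x => f x - x) :
    LipschitzWith (K + 1) f := by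
  simpa using h.add LipschitzWith.id

lemma norm_comp_sub_le {f g : E → E} {Cf Cg : ℝ} (hf : ∀ x, ‖f x - x‖ ≤ Cf)
    (hg : ∀ x, ‖g x - x‖ ≤ Cg) (x : E) : ‖f (g x) - x‖ ≤ Cf + Cg :=
  calc ‖f (g x) - x‖ = ‖(f (g x) - g x) + (g x - x)‖ := by rw [sub_add_sub_cancel]
    _ ≤ Cf + Cg := (norm_add_le _ _).trans (add_le_add (hf _) (hg _))

lemma LipschitzWith.comp_sub_id {f g : E → E} {Kf Kg : ℝ≥0}
    (hf : LipschitzWith Kf fun x => f x - x) (hg : LipschitzWith Kg fun x => g x - x) :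
    LipschitzWith (Kf * (Kg + 1) + Kg) fun x => f (g x) - x := by
  simpa only [Function.comp_apply, sub_add_sub_cancel] using (hf.comp hg.of_sub_id).add hg

end Displacement

namespace Homeomorph

variable (g : ℝ ≃ₜ ℝ) {L : ℝ≥0}

lemma map_volume_le_smul (hg : LipschitzWith L g.symm) :
    Measure.map g volume ≤ (L : ℝ≥0∞) • volume := by
  refine Measure.le_intro fun A hA _ => ?_
  rw [Measure.map_apply g.measurable hA, ← g.image_symm, Measure.smul_apply, smul_eq_mul,
    ← hausdorffMeasure_real]
  simpa using hg.hausdorffMeasure_image_le zero_le_one A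

lemma quasiMeasurePreserving_volume (hg : LipschitzWith L g.symm) :
    Measure.QuasiMeasurePreserving g volume volume :=
  ⟨g.measurable, Measure.absolutelyContinuous_of_le_smul (g.map_volume_le_smul hg)⟩

lemma memLp_comp {F : Type*} [NormedAddCommGroup F] {p : ℝ≥0∞} (hg : LipschitzWith L g.symm)
    {u : ℝ → F} (hu : MemLp u p volume) : MemLp (u ∘ g) p volume :=
  (hu.of_measure_le_smul ENNReal.coe_ne_top (g.map_volume_le_smul hg)).comp_of_map
    g.measurable.aemeasurable

end Homeomorph

lemma AntilipschitzWith.one_le_mul_abs_deriv {f : ℝ → ℝ} {L : ℝ≥0} (hf : AntilipschitzWith L f)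
    {y : ℝ} (hd : DifferentiableAt ℝ f y) : 1 ≤ L * |deriv f y| := by
  refine ge_of_tendsto ((hasDerivAt_iff_tendsto_slope.1 hd.hasDerivAt).abs.const_mul _) ?_
  filter_upwards [self_mem_nhdsWithin] with z (hz : z ≠ y)
  have hpos : 0 < |z - y| := abs_pos.2 (sub_ne_zero.2 hz)
  rw [slope_def_field, abs_div, ← mul_div_assoc, one_le_div hpos]
  simpa [Real.dist_eq] using hf.le_mul_dist z y

lemma abs_inv_sub_one_le {d L : ℝ} (h : 1 ≤ L * |d|) : |d⁻¹ - 1| ≤ L * |d - 1| := by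
  have hd : 0 < |d| := abs_pos.2 fun h0 => by simp [h0] at h; linarith
  have hinv : d⁻¹ - 1 = (1 - d) / d := by field_simp [abs_pos.1 hd]
  rw [hinv, abs_div, abs_sub_comm, div_le_iff₀ hd]
  nlinarith [abs_nonneg (d - 1)]

lemma ae_deriv_comp {f : ℝ → ℝ} {Kf Kg L : ℝ≥0} (hf : LipschitzWith Kf f) {g : ℝ ≃ₜ ℝ}
    (hg : LipschitzWith Kg g) (hg' : LipschitzWith L g.symm) :
    ∀ᵐ x, deriv (f ∘ g) x = deriv f (g x) * deriv g x := by
  filter_upwards [(g.quasiMeasurePreserving_volume hg').ae hf.ae_differentiableAt,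
    hg.ae_differentiableAt] with x hfx hgx
  exact deriv_comp x hfx hgx

lemma Homeomorph.hasDerivAt_symm {f : ℝ ≃ₜ ℝ} {L : ℝ≥0} (hf' : LipschitzWith L f.symm) {x : ℝ}
    (hx : DifferentiableAt ℝ f (f.symm x)) : HasDerivAt f.symm (deriv f (f.symm x))⁻¹ x := by
  have hbound := (hf'.to_rightInverse f.symm_apply_apply).one_le_mul_abs_deriv hx
  refine hx.hasDerivAt.of_local_left_inverse f.symm.continuous.continuousAt (fun h0 => ?_)
    (.of_forall f.apply_symm_apply)
  norm_num [h0] at hbound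

lemma memLp_deriv_comp_sub_one {p : ℝ≥0∞} {f : ℝ → ℝ} {g : ℝ ≃ₜ ℝ} {Kf Kg L : ℝ≥0}
    (hf : LipschitzWith Kf f) (hg : LipschitzWith Kg g) (hg' : LipschitzWith L g.symm)
    (hf₂ : MemLp (fun x => deriv f x - 1) p volume)
    (hg₂ : MemLp (fun x => deriv g x - 1) p volume) :
    MemLp (fun x => deriv (f ∘ g) x - 1) p volume := by
  have hprod : MemLp (fun x => (deriv f (g x) - 1) * deriv g x) p volume := by
    refine (g.memLp_comp hg' hf₂).of_le_mul (c := Kg) ?_ (.of_forall fun x => ?_)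
    · exact ((((measurable_deriv f).comp g.measurable).sub_const 1).mul
        (measurable_deriv g)).aestronglyMeasurable
    · rw [norm_mul, mul_comm]
      exact mul_le_mul_of_nonneg_right (norm_deriv_le_of_lipschitz hg) (norm_nonneg _)
  refine (hprod.add hg₂).ae_eq ?_
  filter_upwards [ae_deriv_comp hf hg hg'] with x hx
  rw [Pi.add_apply, hx]
  ring

lemma memLp_deriv_symm_sub_one {p : ℝ≥0∞} {f : ℝ ≃ₜ ℝ} {K L : ℝ≥0} (hf : LipschitzWith K f)
    (hf' : LipschitzWith L f.symm) (hf₂ : MemLp (fun x => deriv f x - 1) p volume) :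
    MemLp (fun x => deriv f.symm x - 1) p volume := by
  have hf : LipschitzWith K f.symm.symm := by simpa using hf
  refine (f.symm.memLp_comp hf hf₂).of_le_mul (c := L)
    ((measurable_deriv _).sub_const 1).aestronglyMeasurable ?_
  filter_upwards [(f.symm.quasiMeasurePreserving_volume hf).ae hf.ae_differentiableAt] with x hx
  rw [(Homeomorph.hasDerivAt_symm hf' hx).deriv]
  exact abs_inv_sub_one_le ((hf'.to_rightInverse f.symm_apply_apply).one_le_mul_abs_deriv hx)

lemma memG_refl : MemG (Homeomorph.refl ℝ) := by
  refine ⟨⟨0, ?_⟩, ⟨0, ?_⟩, ⟨0, ?_⟩, ⟨0, ?_⟩, ?_⟩ <;> simp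

lemma MemG.trans {f g : ℝ ≃ₜ ℝ} (hg : MemG g) (hf : MemG f) : MemG (g.trans f) := by
  obtain ⟨⟨Cg, hCg⟩, ⟨Kg, hKg⟩, ⟨Cg', hCg'⟩, ⟨Kg', hKg'⟩, hg₂⟩ := hg
  obtain ⟨⟨Cf, hCf⟩, ⟨Kf, hKf⟩, ⟨Cf', hCf'⟩, ⟨Kf', hKf'⟩, hf₂⟩ := hf
  refine ⟨⟨Cf + Cg, ?_⟩, ⟨_, hKf.comp_sub_id hKg⟩, ⟨Cg' + Cf', ?_⟩, ⟨_, hKg'.comp_sub_id hKf'⟩,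
    memLp_deriv_comp_sub_one hKf.of_sub_id hKg.of_sub_id hKg'.of_sub_id hf₂ hg₂⟩
  · exact norm_comp_sub_le (f := f) (g := g) hCf hCg
  · exact norm_comp_sub_le (f := g.symm) (g := f.symm) hCg' hCf'

lemma MemG.symm {f : ℝ ≃ₜ ℝ} (hf : MemG f) : MemG f.symm := by
  obtain ⟨hC, ⟨K, hK⟩, hC', ⟨K', hK'⟩, hf₂⟩ := hf
  exact ⟨hC', ⟨K', hK'⟩, by simpa using hC, ⟨K, by simpa using hK⟩,
    memLp_deriv_symm_sub_one hK.of_sub_id hK'.of_sub_id hf₂⟩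

/-- `G` is a group under composition: it contains the identity, and is closed under
composition and inversion. -/
theorem G_is_group :
    MemG (Homeomorph.refl ℝ) ∧
    (∀ f g : ℝ ≃ₜ ℝ, MemG f → MemG g → MemG (g.trans f)) ∧
    (∀ f : ℝ ≃ₜ ℝ, MemG f → MemG f.symm) :=
  ⟨memG_refl, fun _ _ hf hg => hg.trans hf, fun _ hf => hf.symm⟩
end
end

section
/- Let μ be a positive finite Radon measure on ℝ, y(ξ) = sup{ z : μ((-∞,z)) + z < ξ }, and h(ξ) = 1 − y_ξ(ξ) (defined a.e.). Then h ≥ 0 and 0 ≤ y_ξ ≤ 1 almost everywhere, h ∈ L¹(ℝ) with ∫_ℝ h dξ = μ(ℝ), and the pushforward of the measure h dξ by y equals μ: y_#(h dξ) = μ. -/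
open MeasureTheory Real

noncomputable section

/-- For a positive finite Radon measure `μ` on `ℝ`, with
`y(ξ) = sup{ z : μ((-∞,z)) + z < ξ }` and `h(ξ) = 1 - y_ξ(ξ)` (defined a.e.), one has
`0 ≤ y_ξ ≤ 1` a.e. (hence `h ≥ 0` a.e.), `h ∈ L¹(ℝ)` with `∫ h dξ = μ(ℝ)`, and the
pushforward of the measure `h dξ` under `y` is `μ`. -/
theorem pushforward_recovers_measure (μ : Measure ℝ) [IsFiniteMeasure μ]
    (y h : ℝ → ℝ)
    (hy : y = fun ξ => sSup {z : ℝ | (μ (Set.Iio z)).toReal + z < ξ})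
    (hh : h = fun ξ => 1 - deriv y ξ) :
    (∀ᵐ ξ ∂(volume : Measure ℝ), 0 ≤ deriv y ξ ∧ deriv y ξ ≤ 1) ∧
    (∀ᵐ ξ ∂(volume : Measure ℝ), 0 ≤ h ξ) ∧
    Integrable h volume ∧
    (∫ ξ : ℝ, h ξ) = (μ Set.univ).toReal ∧
    Measure.map y (volume.withDensity fun ξ => ENNReal.ofReal (h ξ)) = μ := by
  have hMnn : (0:ℝ) ≤ (μ Set.univ).toReal := ENNReal.toReal_nonneg
  set M : ℝ := (μ Set.univ).toReal with hM
  set G : ℝ → ℝ := fun z => (μ (Set.Iic z)).toReal + z with hG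
  have hmono : ∀ {s t : Set ℝ}, s ⊆ t → (μ s).toReal ≤ (μ t).toReal :=
    fun hst => ENNReal.toReal_mono (measure_ne_top μ _) (measure_mono hst)
  have hMb : ∀ s : Set ℝ, (μ s).toReal ≤ M := fun s => hmono (Set.subset_univ s)
  have hSne : ∀ ξ : ℝ, (ξ - M - 1) ∈ {z : ℝ | (μ (Set.Iio z)).toReal + z < ξ} := by
    intro ξ
    have := hMb (Set.Iio (ξ - M - 1))
    simp only [Set.mem_setOf_eq]
    linarith
  have hSbdd : ∀ ξ : ℝ, BddAbove {z : ℝ | (μ (Set.Iio z)).toReal + z < ξ} := by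
    intro ξ
    refine ⟨ξ, fun w hw => ?_⟩
    have h0 : (0:ℝ) ≤ (μ (Set.Iio w)).toReal := ENNReal.toReal_nonneg
    simp only [Set.mem_setOf_eq] at hw
    linarith
  -- master lemma: `y ξ ≤ z ↔ ξ ≤ G z`
  have L : ∀ ξ z : ℝ, y ξ ≤ z ↔ ξ ≤ G z := by
    intro ξ z
    constructor
    · intro hyz
      by_contra hlt
      push_neg at hlt
      -- hlt : G z < ξ
      have hseq : Filter.Tendsto (fun n : ℕ => μ (Set.Iio (z + 1/((n:ℝ)+1)))) Filter.atTop
          (nhds (μ (Set.Iic z))) := by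
        have hinter : ⋂ n : ℕ, Set.Iio (z + 1/((n:ℝ)+1)) = Set.Iic z := by
          ext x
          simp only [Set.mem_iInter, Set.mem_Iio, Set.mem_Iic]
          constructor
          · intro hx
            by_contra hzx
            push_neg at hzx
            obtain ⟨n, hn⟩ := exists_nat_one_div_lt (sub_pos.2 hzx)
            have := hx n
            linarith
          · intro hx n
            have hp : (0:ℝ) < 1/((n:ℝ)+1) := by positivity
            linarith
        have := tendsto_measure_iInter_atTop (μ := μ)
          (s := fun n : ℕ => Set.Iio (z + 1/((n:ℝ)+1)))
          (fun n => measurableSet_Iio.nullMeasurableSet)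
          (fun n m hnm => by
            apply Set.Iio_subset_Iio
            have hc : (n:ℝ) ≤ (m:ℝ) := Nat.cast_le.2 hnm
            have : 1/((m:ℝ)+1) ≤ 1/((n:ℝ)+1) := by
              apply one_div_le_one_div_of_le (by positivity)
              linarith
            linarith)
          ⟨0, measure_ne_top μ _⟩
        rwa [hinter] at this
      have hseq' : Filter.Tendsto
          (fun n : ℕ => (μ (Set.Iio (z + 1/((n:ℝ)+1)))).toReal + (z + 1/((n:ℝ)+1)))
          Filter.atTop (nhds (G z)) := by
        have h1 : Filter.Tendsto (fun n : ℕ => (μ (Set.Iio (z + 1/((n:ℝ)+1)))).toReal)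
            Filter.atTop (nhds (μ (Set.Iic z)).toReal) :=
          (ENNReal.tendsto_toReal (measure_ne_top μ _)).comp hseq
        have h2 : Filter.Tendsto (fun n : ℕ => z + 1/((n:ℝ)+1)) Filter.atTop (nhds (z + 0)) :=
          tendsto_const_nhds.add tendsto_one_div_add_atTop_nhds_zero_nat
        have := h1.add h2
        simpa [hG] using this
      have hev := (hseq'.eventually_lt_const hlt).exists
      obtain ⟨n, hn⟩ := hev
      have hmem : z + 1/((n:ℝ)+1) ∈ {w : ℝ | (μ (Set.Iio w)).toReal + w < ξ} := hn
      have hle : z + 1/((n:ℝ)+1) ≤ y ξ := by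
        rw [hy]; exact le_csSup (hSbdd ξ) hmem
      have hp : (0:ℝ) < 1/((n:ℝ)+1) := by positivity
      linarith
    · intro hξ
      rw [hy]
      apply csSup_le ⟨ξ - M - 1, hSne ξ⟩
      intro w hw
      by_contra hzw
      push_neg at hzw
      have hsub : Set.Iic z ⊆ Set.Iio w := fun x hx => lt_of_le_of_lt hx hzw
      have h1 := hmono hsub
      simp only [Set.mem_setOf_eq] at hw
      simp only [hG] at hξ
      linarith
  -- consequences of the master lemma
  have hyG : ∀ z, y (G z) = z := by
    intro z
    have h1 : y (G z) ≤ z := (L _ z).2 le_rfl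
    refine le_antisymm h1 ?_
    by_contra hc
    push_neg at hc
    have h2 : G z ≤ G (y (G z)) := (L (G z) (y (G z))).1 le_rfl
    have h3 := hmono (Set.Iic_subset_Iic.2 hc.le)
    simp only [hG] at h2
    linarith
  have hymono : Monotone y := by
    intro a b hab
    have h1 : b ≤ G (y b) := (L b (y b)).1 le_rfl
    exact (L a (y b)).2 (le_trans hab h1)
  have hylip : ∀ a b : ℝ, a ≤ b → y b ≤ y a + (b - a) := by
    intro a b hab
    apply (L b (y a + (b - a))).2
    have h1 : a ≤ G (y a) := (L a (y a)).1 le_rfl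
    have h2 : (μ (Set.Iic (y a))).toReal ≤ (μ (Set.Iic (y a + (b - a)))).toReal :=
      hmono (Set.Iic_subset_Iic.2 (by linarith))
    simp only [hG] at h1 ⊢
    linarith
  have hyle : ∀ ξ : ℝ, y ξ ≤ ξ := by
    intro ξ
    apply (L ξ ξ).2
    simp only [hG]
    have : (0:ℝ) ≤ (μ (Set.Iic ξ)).toReal := ENNReal.toReal_nonneg
    linarith
  have hyge : ∀ ξ : ℝ, ξ - M ≤ y ξ := by
    intro ξ
    have h1 : ξ ≤ G (y ξ) := (L ξ (y ξ)).1 le_rfl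
    have h2 := hMb (Set.Iic (y ξ))
    simp only [hG] at h1
    linarith
  -- the function g = id - y
  set g : ℝ → ℝ := fun ξ => ξ - y ξ with hgdef
  have hgmono : Monotone g := by
    intro a b hab
    have := hylip a b hab
    simp only [hgdef]
    linarith
  have hylip1 : LipschitzWith 1 y := by
    apply LipschitzWith.of_dist_le_mul
    intro a b
    rw [Real.dist_eq, Real.dist_eq, NNReal.coe_one, one_mul]
    rcases le_total a b with hab | hab
    · have h1 := hylip a b hab
      have h2 := hymono hab
      rw [abs_of_nonpos (by linarith : y a - y b ≤ 0), abs_of_nonpos (by linarith : a - b ≤ 0)]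
      linarith
    · have h1 := hylip b a hab
      have h2 := hymono hab
      rw [abs_of_nonneg (by linarith : 0 ≤ y a - y b), abs_of_nonneg (by linarith : 0 ≤ a - b)]
      linarith
  have hycont : Continuous y := hylip1.continuous
  have hgcont : Continuous g := continuous_id.sub hycont
  have hg0 : ∀ ξ, 0 ≤ g ξ := by
    intro ξ
    have := hyle ξ
    simp only [hgdef]
    linarith
  have hgM : ∀ ξ, g ξ ≤ M := by
    intro ξ
    have := hyge ξ
    simp only [hgdef]
    linarith
  have hgG : ∀ z, g (G z) = (μ (Set.Iic z)).toReal := by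
    intro z
    show G z - y (G z) = _
    rw [hyG z]
    simp only [hG]
    ring
  -- limits of g at ±∞
  have hgtop : Filter.Tendsto g Filter.atTop (nhds M) := by
    rw [Metric.tendsto_atTop]
    intro ε hε
    have htR : Filter.Tendsto (fun z : ℝ => (μ (Set.Iic z)).toReal) Filter.atTop (nhds M) :=
      (ENNReal.tendsto_toReal (measure_ne_top μ _)).comp (tendsto_measure_Iic_atTop μ)
    obtain ⟨z, hz⟩ := (Metric.tendsto_atTop.1 htR) ε hε
    refine ⟨G z, fun ξ hξ => ?_⟩
    have h1 : g (G z) ≤ g ξ := hgmono hξ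
    have h2 : g ξ ≤ M := hgM ξ
    have h3 := hz z le_rfl
    rw [Real.dist_eq] at h3
    rw [hgG] at h1
    have h4 : M - (μ (Set.Iic z)).toReal < ε := by
      have := abs_lt.1 h3
      linarith [this.1]
    rw [Real.dist_eq, abs_of_nonpos (by linarith)]
    linarith
  have hgbot : Filter.Tendsto g Filter.atBot (nhds 0) := by
    rw [Metric.tendsto_nhds]
    intro ε hε
    have hIic : Filter.Tendsto (fun z : ℝ => μ (Set.Iic z)) Filter.atBot (nhds (μ (⋂ z : ℝ, Set.Iic z))) :=
      tendsto_measure_iInter_atBot (fun z => measurableSet_Iic.nullMeasurableSet)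
        (fun a b hab => Set.Iic_subset_Iic.2 hab) ⟨0, measure_ne_top μ _⟩
    have hempty : (⋂ z : ℝ, Set.Iic z) = ∅ := by
      ext x
      simp only [Set.mem_iInter, Set.mem_Iic, Set.mem_empty_iff_false, iff_false, not_forall]
      exact ⟨x - 1, by push_neg; linarith⟩
    rw [hempty, measure_empty] at hIic
    have htR : Filter.Tendsto (fun z : ℝ => (μ (Set.Iic z)).toReal) Filter.atBot (nhds 0) := by
      have := (ENNReal.tendsto_toReal (by simp : (0:ENNReal) ≠ ⊤)).comp hIic
      exact this
    obtain ⟨z, h3⟩ := (Metric.tendsto_nhds.1 htR ε hε).exists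
    rw [Filter.eventually_atBot]
    refine ⟨G z, fun ξ hξ => ?_⟩
    have h1 : g ξ ≤ g (G z) := hgmono hξ
    rw [hgG] at h1
    rw [Real.dist_eq, sub_zero] at h3
    have h4 : (μ (Set.Iic z)).toReal < ε := lt_of_abs_lt h3
    have h5 := hg0 ξ
    rw [Real.dist_eq, sub_zero, abs_of_nonneg h5]
    linarith
  -- Stieltjes functions
  set sy : StieltjesFunction ℝ := ⟨y, hymono, fun x => hycont.continuousWithinAt⟩ with hsy
  set sg : StieltjesFunction ℝ := ⟨g, hgmono, fun x => hgcont.continuousWithinAt⟩ with hsg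
  have hsgf : ⇑sg = g := rfl
  have hsyf : ⇑sy = y := rfl
  haveI hfin : IsFiniteMeasure sg.measure :=
    sg.isFiniteMeasure (l := 0) (u := M) (by rw [hsgf]; exact hgbot) (by rw [hsgf]; exact hgtop)
  -- volume = sy.measure + sg.measure
  have hvol : (volume : Measure ℝ) = sy.measure + sg.measure := by
    refine MeasureTheory.Measure.ext_of_Ioc _ _ (fun a b hab => ?_)
    rw [Measure.add_apply, sy.measure_Ioc, sg.measure_Ioc, Real.volume_Ioc]
    rw [hsgf, hsyf]
    have h1 : 0 ≤ y b - y a := sub_nonneg.2 (hymono hab.le)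
    have h2 : 0 ≤ g b - g a := sub_nonneg.2 (hgmono hab.le)
    rw [← ENNReal.ofReal_add h1 h2]
    congr 1
    simp only [hgdef]
    ring
  have hle : sg.measure ≤ volume := by
    rw [hvol]
    exact Measure.le_add_left le_rfl
  have hac : sg.measure ≪ volume := hle.absolutelyContinuous
  -- the key a.e. statement
  have key : ∀ᵐ ξ : ℝ, (0 ≤ deriv y ξ ∧ deriv y ξ ≤ 1) ∧
      ENNReal.ofReal (h ξ) = sg.measure.rnDeriv volume ξ ∧ 0 ≤ h ξ := by
    filter_upwards [sy.ae_hasDerivAt, sg.ae_hasDerivAt,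
      Measure.rnDeriv_lt_top sg.measure volume] with ξ h1 h2 h3
    set r1 := (sy.measure.rnDeriv volume ξ).toReal with hr1def
    set r2 := (sg.measure.rnDeriv volume ξ).toReal with hr2def
    have hr1 : (0:ℝ) ≤ r1 := ENNReal.toReal_nonneg
    have hr2 : (0:ℝ) ≤ r2 := ENNReal.toReal_nonneg
    have hy1 : HasDerivAt y r1 ξ := h1
    have hg2 : HasDerivAt g r2 ξ := h2
    have hsum : HasDerivAt (fun t => y t + g t) (r1 + r2) ξ := hy1.add hg2
    have hfun : (fun t => y t + g t) = fun t : ℝ => t := funext fun t => by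
      simp only [hgdef]; ring
    rw [hfun] at hsum
    have hr12 : r1 + r2 = 1 := hsum.unique (hasDerivAt_id ξ)
    have hd : deriv y ξ = r1 := hy1.deriv
    refine ⟨⟨by rw [hd]; exact hr1, by rw [hd]; linarith⟩, ?_, ?_⟩
    · rw [hh]
      simp only [hd]
      have he : 1 - r1 = r2 := by linarith
      rw [he, hr2def, ENNReal.ofReal_toReal h3.ne]
    · rw [hh]
      simp only [hd]
      linarith
  -- identification of the withDensity measure
  have hwd : volume.withDensity (fun ξ => ENNReal.ofReal (h ξ)) = sg.measure := by
    have hcongr := withDensity_congr_ae (μ := (volume : Measure ℝ))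
      (f := fun ξ => ENNReal.ofReal (h ξ)) (g := sg.measure.rnDeriv volume)
      (key.mono fun ξ hξ => hξ.2.1)
    rw [hcongr, Measure.withDensity_rnDeriv_eq _ _ hac]
  have hmeas : Measurable h := by
    rw [hh]
    exact (measurable_deriv y).const_sub 1
  have huniv : sg.measure Set.univ = ENNReal.ofReal M := by
    rw [sg.measure_univ (l := 0) (u := M) (by rw [hsgf]; exact hgbot) (by rw [hsgf]; exact hgtop)]
    norm_num
  have hlint : ∫⁻ ξ, ENNReal.ofReal (h ξ) = sg.measure Set.univ := by
    rw [← hwd, withDensity_apply _ MeasurableSet.univ, setLIntegral_univ]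
  have hintg : Integrable h volume := by
    constructor
    · exact hmeas.aestronglyMeasurable
    · have heq : ∀ᵐ ξ : ℝ, ‖h ξ‖ₑ = ENNReal.ofReal (h ξ) :=
        key.mono fun ξ hξ => by rw [Real.enorm_eq_ofReal hξ.2.2]
      rw [HasFiniteIntegral, lintegral_congr_ae heq, hlint, huniv]
      exact ENNReal.ofReal_lt_top
  have hint : (∫ ξ : ℝ, h ξ) = (μ Set.univ).toReal := by
    rw [integral_eq_lintegral_of_nonneg_ae (key.mono fun ξ hξ => hξ.2.2)
      hmeas.aestronglyMeasurable, hlint, huniv, ENNReal.toReal_ofReal hMnn]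
  -- the pushforward statement
  have hymeas : Measurable y := hycont.measurable
  have hmap : Measure.map y sg.measure = μ := by
    haveI : IsFiniteMeasure (Measure.map y sg.measure) :=
      Measure.isFiniteMeasure_map sg.measure y
    refine MeasureTheory.Measure.ext_of_Iic (Measure.map y sg.measure) μ (fun z => ?_)
    rw [Measure.map_apply hymeas measurableSet_Iic]
    have hpre : y ⁻¹' Set.Iic z = Set.Iic (G z) := by
      ext ξ
      simp only [Set.mem_preimage, Set.mem_Iic]
      exact L ξ z
    rw [hpre, sg.measure_Iic (l := 0) (by rw [hsgf]; exact hgbot), hsgf, sub_zero, hgG z,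
      ENNReal.ofReal_toReal (measure_ne_top μ _)]
  exact ⟨key.mono fun ξ hξ => hξ.1, key.mono fun ξ hξ => hξ.2.2, hintg, hint,
    by rw [hwd]; exact hmap⟩
end
end
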